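/- With [i] := θ^{q^i} − θ ∈ A, d_0 := 1 and d_i := [i]·d_{i−1}^q for i ≥ 1: every d_i is nonzero with |d_i| = q^{i·q^i}; the series Σ_{i≥0} z^{q^i}/d_i converges for every z ∈ C, so it defines a function e_C : C → C; and e_C is 𝔽_q-linear (additive and 𝔽_q-homogeneous) and satisfies e_C(θz) = θ·e_C(z) + e_C(z)^q for all z ∈ C. -/

import Mathlib

/-!
Since `‖θ‖ > 1`, the ultrametric inequality gives `‖θ^{q^i} - θ‖ = ‖θ‖^{q^i}`, hence
`‖d_i‖ = ‖θ‖^{i q^i}` and the `i`-th term of `e_C(z)` has norm `(‖z‖ / ‖θ‖^i)^{q^i} → 0`, which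
suffices for summability in a complete ultrametric field. Additivity is termwise, `z ↦ z^{q^i}`
being a power of Frobenius. For the functional equation, `d_{i+1} = [i+1] d_i^q` gives
`(θz)^{q^{i+1}}/d_{i+1} = θ z^{q^{i+1}}/d_{i+1} + (z^{q^i}/d_i)^q`, and Frobenius commutes with
`tsum` by continuity.
-/

/-- The Carlitz factorials: `d_0 = 1`, `d_i = [i] d_{i-1}^q` with `[i] = θ^{q^i} - θ`. -/
noncomputable def carlitzD {C : Type*} [Field C] (q : ℕ) (θ : C) : ℕ → C
  | 0 => 1
  | i + 1 => (θ ^ q ^ (i + 1) - θ) * carlitzD q θ i ^ q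

open Filter Topology

lemma carlitzD_succ {C : Type*} [Field C] (q : ℕ) (θ : C) (i : ℕ) :
    carlitzD q θ (i + 1) = (θ ^ q ^ (i + 1) - θ) * carlitzD q θ i ^ q :=
  rfl

noncomputable def carlitzExp {C : Type*} [NormedField C] (q : ℕ) (θ : C) (z : C) : C :=
  ∑' i : ℕ, z ^ q ^ i / carlitzD q θ i

lemma pow_pow_eq_self_of_pow_eq_self {M : Type*} [Monoid M] {x : M} {q : ℕ} (hx : x ^ q = x) :
    ∀ i : ℕ, x ^ q ^ i = x
  | 0 => pow_one x
  | i + 1 => by rw [pow_succ, pow_mul, pow_pow_eq_self_of_pow_eq_self hx i, hx]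

lemma tsum_pow_expChar_pow {R ι : Type*} [CommRing R] [TopologicalSpace R] [IsTopologicalRing R]
    [T2Space R] (p n : ℕ) [ExpChar R p] {f : ι → R} (hf : Summable f) :
    (∑' i, f i) ^ p ^ n = ∑' i, f i ^ p ^ n :=
  hf.map_tsum (iterateFrobenius R p n) (continuous_pow _)

lemma carlitz_term_mul_succ {C : Type*} [Field C] {q : ℕ} {θ : C} {i : ℕ}
    (hd : carlitzD q θ (i + 1) ≠ 0) (z : C) :
    (θ * z) ^ q ^ (i + 1) / carlitzD q θ (i + 1) =
      θ * (z ^ q ^ (i + 1) / carlitzD q θ (i + 1)) + (z ^ q ^ i / carlitzD q θ i) ^ q := by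
  rw [carlitzD_succ, mul_ne_zero_iff] at hd
  rw [carlitzD_succ, div_pow, ← pow_mul, ← pow_succ, mul_pow]
  field_simp [hd.1, hd.2]
  ring

section Ultrametric

variable {C : Type*} [NormedField C] [IsUltrametricDist C] {θ : C}

lemma norm_pow_sub_self_of_one_lt (hθ : 1 < ‖θ‖) {n : ℕ} (hn : 2 ≤ n) :
    ‖θ ^ n - θ‖ = ‖θ‖ ^ n := by
  have hlt : ‖θ‖ < ‖θ ^ n‖ := by
    simpa only [pow_one, norm_pow] using pow_lt_pow_right₀ hθ (n := n) (m := 1) (by omega)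
  rw [sub_eq_add_neg,
    IsUltrametricDist.norm_add_eq_max_of_norm_ne_norm (by rw [norm_neg]; exact hlt.ne'), norm_neg,
    max_eq_left hlt.le, norm_pow]

variable {q : ℕ} (hq : 2 ≤ q) (hθ : 1 < ‖θ‖)
include hq hθ

lemma norm_carlitzD : ∀ i : ℕ, ‖carlitzD q θ i‖ = ‖θ‖ ^ (i * q ^ i)
  | 0 => by simp [carlitzD]
  | i + 1 => by
    have hqi : 2 ≤ q ^ (i + 1) := hq.trans (Nat.le_self_pow i.succ_ne_zero q)
    rw [carlitzD_succ, norm_mul, norm_pow, norm_carlitzD i, norm_pow_sub_self_of_one_lt hθ hqi,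
      ← pow_mul, ← pow_add]
    congr 1
    ring

lemma carlitzD_ne_zero (i : ℕ) : carlitzD q θ i ≠ 0 := by
  rw [← norm_ne_zero_iff, norm_carlitzD hq hθ]
  exact (pow_pos (one_pos.trans hθ) _).ne'

lemma norm_carlitz_term (z : C) (i : ℕ) :
    ‖z ^ q ^ i / carlitzD q θ i‖ = (‖z‖ / ‖θ‖ ^ i) ^ q ^ i := by
  rw [norm_div, norm_pow, norm_carlitzD hq hθ, div_pow, ← pow_mul]

/-- Once `‖z‖ / ‖θ‖^i ≤ 1`, the `i`-th term has norm at most `‖z‖ / ‖θ‖^i`, which tends to `0`. -/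
lemma tendsto_carlitz_term_zero (z : C) :
    Tendsto (fun i : ℕ => z ^ q ^ i / carlitzD q θ i) atTop (𝓝 0) := by
  have hratio : Tendsto (fun i : ℕ => ‖z‖ / ‖θ‖ ^ i) atTop (𝓝 0) :=
    tendsto_const_nhds.div_atTop (tendsto_pow_atTop_atTop_of_one_lt hθ)
  rw [tendsto_zero_iff_norm_tendsto_zero]
  refine squeeze_zero' (Eventually.of_forall fun i => norm_nonneg _) ?_ hratio
  filter_upwards [hratio.eventually (ge_mem_nhds one_pos)] with i hi
  rw [norm_carlitz_term hq hθ]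
  exact pow_le_of_le_one (by positivity) hi (pow_ne_zero _ (by omega))

variable [CompleteSpace C]

lemma summable_carlitz_term (z : C) : Summable fun i : ℕ => z ^ q ^ i / carlitzD q θ i :=
  NonarchimedeanAddGroup.summable_of_tendsto_cofinite_zero <| by
    simpa only [Nat.cofinite_eq_atTop] using tendsto_carlitz_term_zero hq hθ z

lemma carlitzExp_mul_of_pow_eq_self {c : C} (hc : c ^ q = c) (z : C) :
    carlitzExp q θ (c * z) = c * carlitzExp q θ z := by
  simp only [carlitzExp, ← (summable_carlitz_term hq hθ z).tsum_mul_left, mul_pow,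
    pow_pow_eq_self_of_pow_eq_self hc, mul_div_assoc]

variable {p e : ℕ} [ExpChar C p] (hqp : q = p ^ e)
include hqp

lemma carlitzExp_add (x y : C) :
    carlitzExp q θ (x + y) = carlitzExp q θ x + carlitzExp q θ y := by
  have hfrob (i : ℕ) : (x + y) ^ q ^ i = x ^ q ^ i + y ^ q ^ i := by
    rw [hqp, ← pow_mul, add_pow_expChar_pow]
  simp only [carlitzExp, hfrob, add_div,
    ← (summable_carlitz_term hq hθ x).tsum_add (summable_carlitz_term hq hθ y)]

lemma carlitzExp_pow (z : C) :
    carlitzExp q θ z ^ q = ∑' i : ℕ, (z ^ q ^ i / carlitzD q θ i) ^ q := by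
  simpa only [carlitzExp, ← hqp] using tsum_pow_expChar_pow p e (summable_carlitz_term hq hθ z)

lemma summable_carlitz_term_pow (z : C) :
    Summable fun i : ℕ => (z ^ q ^ i / carlitzD q θ i) ^ q := by
  simpa only [Function.comp_def, iterateFrobenius_def, ← hqp] using
    (summable_carlitz_term hq hθ z).map (iterateFrobenius C p e) (continuous_pow _)

lemma carlitzExp_mul_theta (z : C) :
    carlitzExp q θ (θ * z) = θ * carlitzExp q θ z + carlitzExp q θ z ^ q := by
  have hs := summable_carlitz_term hq hθ z
  have hshift := (summable_nat_add_iff 1).mpr hs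
  rw [carlitzExp, (summable_carlitz_term hq hθ (θ * z)).tsum_eq_zero_add,
    tsum_congr fun i => carlitz_term_mul_succ (carlitzD_ne_zero hq hθ (i + 1)) z,
    (hshift.mul_left θ).tsum_add (summable_carlitz_term_pow hq hθ hqp z), tsum_mul_left,
    carlitzExp_pow hq hθ hqp, carlitzExp, hs.tsum_eq_zero_add, mul_add, add_assoc]
  simp [carlitzD]

end Ultrametric

theorem carlitz_exponential_properties_general
    {C : Type*} [NormedField C] [CompleteSpace C] [IsUltrametricDist C]
    (p e : ℕ) (hp : p.Prime) (he : 0 < e) [CharP C p]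
    (q : ℕ) (hq : q = p ^ e)
    (θ : C) (hθ : ‖θ‖ = (q : ℝ))
    (eC : C → C) (heC : ∀ z : C, eC z = ∑' i : ℕ, z ^ q ^ i / carlitzD q θ i) :
    (∀ i : ℕ, carlitzD q θ i ≠ 0 ∧ ‖carlitzD q θ i‖ = (q : ℝ) ^ (i * q ^ i)) ∧
    (∀ z : C, Summable fun i : ℕ => z ^ q ^ i / carlitzD q θ i) ∧
    (∀ x y : C, eC (x + y) = eC x + eC y) ∧
    (∀ lam z : C, lam ^ q = lam → eC (lam * z) = lam * eC z) ∧
    (∀ z : C, eC (θ * z) = θ * eC z + eC z ^ q) := by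
  have : Fact p.Prime := ⟨hp⟩
  have hq2 : 2 ≤ q := hq ▸ Nat.one_lt_pow he.ne' hp.one_lt
  have hθ1 : 1 < ‖θ‖ := by rw [hθ]; exact_mod_cast hq2
  obtain rfl : eC = carlitzExp q θ := funext heC
  exact ⟨fun i => ⟨carlitzD_ne_zero hq2 hθ1 i, hθ ▸ norm_carlitzD hq2 hθ1 i⟩,
    summable_carlitz_term hq2 hθ1, carlitzExp_add hq2 hθ1 hq,
    fun _ z hlam => carlitzExp_mul_of_pow_eq_self hq2 hθ1 hlam z,
    carlitzExp_mul_theta hq2 hθ1 hq⟩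

/-- Basic properties of the Carlitz exponential: every `d_i` is nonzero with
`|d_i| = q^{i·q^i}`; the series `∑ z^{q^i}/d_i` converges for every `z ∈ C`, defining
`e_C : C → C`; and `e_C` is additive, `𝔽_q`-homogeneous (with `𝔽_q` identified with
`{λ : C | λ^q = λ}`), and satisfies `e_C(θz) = θ e_C(z) + e_C(z)^q`. -/
theorem carlitz_exponential_properties
    {C : Type*} [NormedField C] [CompleteSpace C] [IsAlgClosed C] [IsUltrametricDist C]
    (p e : ℕ) (hp : p.Prime) (he : 0 < e) [CharP C p]
    (q : ℕ) (hq : q = p ^ e)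
    (θ : C) (hθ : ‖θ‖ = (q : ℝ))
    (eC : C → C) (heC : ∀ z : C, eC z = ∑' i : ℕ, z ^ q ^ i / carlitzD q θ i) :
    (∀ i : ℕ, carlitzD q θ i ≠ 0 ∧ ‖carlitzD q θ i‖ = (q : ℝ) ^ (i * q ^ i)) ∧
    (∀ z : C, Summable fun i : ℕ => z ^ q ^ i / carlitzD q θ i) ∧
    (∀ x y : C, eC (x + y) = eC x + eC y) ∧
    (∀ lam z : C, lam ^ q = lam → eC (lam * z) = lam * eC z) ∧
    (∀ z : C, eC (θ * z) = θ * eC z + eC z ^ q) :=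
  carlitz_exponential_properties_general p e hp he q hq θ hθ eC heC
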